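/- arXiv:2310.14041 — 7 statements merged into one kernel-verified Lean document; each statement's English description precedes it below -/
import Mathlib

section
/- For any doubly stochastic matrix D, the maximum over doubly stochastic matrices S of the ℓ^1→ℓ^1 operator norm ‖D − S‖ equals 2(1 − min_{i,j} d_{ij}). -/
open Matrix Finset

/-- `D` is doubly stochastic: nonnegative entries, all row and column sums equal `1`. -/
def IsDoublyStochastic {n : ℕ} (D : Matrix (Fin n) (Fin n) ℝ) : Prop :=
  (∀ i j, 0 ≤ D i j) ∧ (∀ i, ∑ j, D i j = 1) ∧ (∀ j, ∑ i, D i j = 1)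

/-- The `ℓ^1 → ℓ^1` operator norm: the maximum absolute column sum. -/
noncomputable def l1OpNorm {n : ℕ} (A : Matrix (Fin n) (Fin n) ℝ) : ℝ :=
  ⨆ j, ∑ i, |A i j|

/-- For a doubly stochastic `D`, the maximum over doubly stochastic `S` of
`‖D − S‖_{1→1}` equals `2(1 − min_{i,j} d_{ij})`. -/
theorem max_l1_dist_from_doublyStochastic {n : ℕ} (hn : 0 < n)
    (D : Matrix (Fin n) (Fin n) ℝ) (hD : IsDoublyStochastic D) :
    IsGreatest ((fun S => l1OpNorm (D - S)) '' {S | IsDoublyStochastic S})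
      (2 * (1 - ⨅ p : Fin n × Fin n, D p.1 p.2)) := by
  haveI : Nonempty (Fin n) := Fin.pos_iff_nonempty.mp hn
  obtain ⟨hDnn, hDrow, hDcol⟩ := hD
  set m : ℝ := ⨅ p : Fin n × Fin n, D p.1 p.2 with hm_def
  have hentry_le_one : ∀ i j, D i j ≤ 1 := by
    intro i j
    calc D i j ≤ ∑ j', D i j' :=
          Finset.single_le_sum (fun k _ => hDnn i k) (mem_univ j)
      _ = 1 := hDrow i
  obtain ⟨⟨i0, j0⟩, hmin⟩ := Finite.exists_min (fun p : Fin n × Fin n => D p.1 p.2)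
  have hm_eq : m = D i0 j0 :=
    le_antisymm (ciInf_le (Finite.bddBelow_range _) (i0, j0)) (le_ciInf hmin)
  have hm_le : ∀ i j, m ≤ D i j := fun i j => hm_eq ▸ hmin (i, j)
  have hm0 : 0 ≤ m := hm_eq ▸ hDnn i0 j0
  have hm1 : m ≤ 1 := hm_eq ▸ hentry_le_one i0 j0
  have key : ∀ S, IsDoublyStochastic S → ∀ j, ∑ i, |D i j - S i j| ≤ 2 * (1 - m) := by
    rintro S ⟨hSnn, hSrow, hScol⟩ j
    have hSle1 : ∀ i, S i j ≤ 1 := by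
      intro i
      calc S i j ≤ ∑ i', S i' j :=
            Finset.single_le_sum (fun k _ => hSnn k j) (mem_univ i)
        _ = 1 := hScol j
    have h1 : ∑ i, |D i j - S i j| = ∑ i, (D i j + S i j - 2 * min (D i j) (S i j)) := by
      refine Finset.sum_congr rfl fun i _ => ?_
      rcases le_total (D i j) (S i j) with h | h
      · rw [min_eq_left h, abs_of_nonpos (by linarith)]; ring
      · rw [min_eq_right h, abs_of_nonneg (by linarith)]; ring
    have h2 : ∀ i, m * S i j ≤ min (D i j) (S i j) := by
      intro i
      rcases le_total (D i j) (S i j) with h | h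
      · rw [min_eq_left h]; nlinarith [hm_le i j, hSle1 i, hm0]
      · rw [min_eq_right h]; nlinarith [hm1, hSnn i j, hm_le i j]
    have h3 : m ≤ ∑ i, min (D i j) (S i j) := by
      calc m = ∑ i, m * S i j := by rw [← Finset.mul_sum, hScol j, mul_one]
        _ ≤ _ := Finset.sum_le_sum fun i _ => h2 i
    rw [h1, Finset.sum_sub_distrib, Finset.sum_add_distrib, hDcol j, hScol j,
      ← Finset.mul_sum]
    linarith
  constructor
  · -- membership: the swap permutation matrix attains the value
    set S : Matrix (Fin n) (Fin n) ℝ :=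
      fun i j => if Equiv.swap i0 j0 i = j then 1 else 0 with hS_def
    have hS : IsDoublyStochastic S := by
      refine ⟨fun i j => by dsimp only [S]; split <;> norm_num, fun i => ?_, fun j => ?_⟩
      · simp [S, Finset.sum_ite_eq]
      · rw [Fintype.sum_equiv (Equiv.swap i0 j0) (fun i => S i j)
            (fun k => if k = j then (1:ℝ) else 0) (fun i => rfl)]
        simp
    refine ⟨S, hS, ?_⟩
    have hterm : ∀ i, |(D - S) i j0| = D i j0 + (if i = i0 then 1 - 2 * D i0 j0 else 0) := by
      intro i
      by_cases h : i = i0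
      · subst h
        have hs : S i j0 = 1 := by
          simp [S, Equiv.swap_apply_left]
        rw [Matrix.sub_apply, hs, if_pos rfl,
          abs_of_nonpos (by linarith [hentry_le_one i j0])]
        ring
      · have hc : Equiv.swap i0 j0 i ≠ j0 := by
          intro hc
          exact h ((Equiv.swap i0 j0).injective
            (by rw [hc, Equiv.swap_apply_left]))
        have hs : S i j0 = 0 := by simp [S, hc]
        rw [Matrix.sub_apply, hs, if_neg h, sub_zero, abs_of_nonneg (hDnn i j0), add_zero]
    have hcol : ∑ i, |(D - S) i j0| = 2 * (1 - m) := by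
      calc ∑ i, |(D - S) i j0|
          = ∑ i, (D i j0 + if i = i0 then 1 - 2 * D i0 j0 else 0) :=
            Finset.sum_congr rfl fun i _ => hterm i
        _ = 2 * (1 - m) := by
            rw [Finset.sum_add_distrib, hDcol j0, Finset.sum_ite_eq' univ i0]
            simp only [mem_univ, if_true]
            rw [hm_eq]; ring
    show l1OpNorm (D - S) = 2 * (1 - m)
    unfold l1OpNorm
    apply le_antisymm
    · apply ciSup_le
      intro j
      simpa only [Matrix.sub_apply] using key S hS j
    · calc 2 * (1 - m) = ∑ i, |(D - S) i j0| := hcol.symm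
        _ ≤ ⨆ j, ∑ i, |(D - S) i j| := le_ciSup (f := fun j => ∑ i, |(D - S) i j|) (Finite.bddAbove_range _) j0
  · rintro x ⟨S, hS, rfl⟩
    show l1OpNorm (D - S) ≤ 2 * (1 - m)
    unfold l1OpNorm
    apply ciSup_le
    intro j
    simpa only [Matrix.sub_apply] using key S hS j
end

section
/- For any doubly stochastic matrix D, the maximum over doubly stochastic S of the ℓ^∞→ℓ^∞ operator norm ‖D − S‖ equals 2(1 − min_{i,j} d_{ij}). -/
open Matrix Finset

/-- The `ℓ^∞ → ℓ^∞` operator norm: the maximum absolute row sum. -/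
noncomputable def linftyOpNorm {n : ℕ} (A : Matrix (Fin n) (Fin n) ℝ) : ℝ :=
  ⨆ i, ∑ j, |A i j|

/-- For a doubly stochastic `D`, the maximum over doubly stochastic `S` of
`‖D − S‖_{∞→∞}` equals `2(1 − min_{i,j} d_{ij})`. -/
theorem max_linfty_dist_from_doublyStochastic {n : ℕ} (hn : 0 < n)
    (D : Matrix (Fin n) (Fin n) ℝ) (hD : IsDoublyStochastic D) :
    IsGreatest ((fun S => linftyOpNorm (D - S)) '' {S | IsDoublyStochastic S})
      (2 * (1 - ⨅ p : Fin n × Fin n, D p.1 p.2)) := by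
  haveI : Nonempty (Fin n) := ⟨⟨0, hn⟩⟩
  obtain ⟨hDpos, hDrow, hDcol⟩ := hD
  set m := ⨅ p : Fin n × Fin n, D p.1 p.2 with hm
  have hmle : ∀ i j, m ≤ D i j := fun i j =>
    ciInf_le (Set.finite_range _).bddBelow (⟨i, j⟩ : Fin n × Fin n)
  obtain ⟨⟨i0, j0⟩, hp⟩ :=
    exists_eq_ciInf_of_finite (f := fun p : Fin n × Fin n => D p.1 p.2)
  have hp' : D i0 j0 = m := hp
  have hm0 : 0 ≤ m := hp' ▸ hDpos i0 j0
  have hDle1 : ∀ i j, D i j ≤ 1 := by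
    intro i j
    calc D i j ≤ ∑ k, D i k :=
          Finset.single_le_sum (fun k _ => hDpos i k) (mem_univ j)
      _ = 1 := hDrow i
  have hm1 : m ≤ 1 := le_trans (hmle i0 j0) (hDle1 i0 j0)
  -- upper bound on every absolute row sum
  have key : ∀ S : Matrix (Fin n) (Fin n) ℝ, IsDoublyStochastic S → ∀ i, ∑ j, |(D - S) i j| ≤ 2 * (1 - m) := by
    rintro S ⟨hSpos, hSrow, hScol⟩ i
    have hSle1 : ∀ j, S i j ≤ 1 := fun j => by
      have := Finset.single_le_sum (fun k (_ : k ∈ univ) => hSpos i k) (mem_univ j)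
      rw [hSrow i] at this; exact this
    have h1 : ∀ j, |(D - S) i j| = D i j + S i j - 2 * min (D i j) (S i j) := by
      intro j
      have h1 := max_sub_min_eq_abs (D i j) (S i j)
      have h2 := min_add_max (D i j) (S i j)
      have h3 : |D i j - S i j| = |S i j - D i j| := abs_sub_comm _ _
      simp only [Matrix.sub_apply]
      linarith
    have h2 : ∀ j, m * S i j ≤ min (D i j) (S i j) := by
      intro j
      refine le_min ?_ ?_
      · nlinarith [hmle i j, hSpos i j, hSle1 j]
      · nlinarith [hSpos i j]
    calc ∑ j, |(D - S) i j| = ∑ j, (D i j + S i j - 2 * min (D i j) (S i j)) :=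
          Finset.sum_congr rfl fun j _ => h1 j
      _ = (∑ j, D i j) + (∑ j, S i j) - 2 * ∑ j, min (D i j) (S i j) := by
          rw [Finset.sum_sub_distrib, Finset.sum_add_distrib, Finset.mul_sum]
      _ ≤ 1 + 1 - 2 * m := by
          have hms : m = ∑ j, m * S i j := by rw [← Finset.mul_sum, hSrow i, mul_one]
          have hle : m ≤ ∑ j, min (D i j) (S i j) := by
            rw [hms]; exact Finset.sum_le_sum fun j _ => h2 j
          rw [hDrow i, hSrow i]; linarith
      _ = 2 * (1 - m) := by ring
  -- the achieving permutation matrix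
  set σ : Equiv.Perm (Fin n) := Equiv.swap i0 j0 with hσ
  set S0 : Matrix (Fin n) (Fin n) ℝ := fun i j => if j = σ i then 1 else 0 with hS0def
  have hσi0 : σ i0 = j0 := Equiv.swap_apply_left i0 j0
  have hS0 : IsDoublyStochastic S0 := by
    refine ⟨?_, ?_, ?_⟩
    · intro i j; simp only [hS0def]; split <;> norm_num
    · intro i; simp [hS0def]
    · intro j
      have hcond : ∀ i, S0 i j = if i = σ.symm j then (1:ℝ) else 0 := by
        intro i
        simp only [hS0def]
        refine if_congr ?_ rfl rfl
        rw [Equiv.eq_symm_apply]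
        exact eq_comm
      simp [hcond]
  have hrow : ∑ j, |(D - S0) i0 j| = 2 * (1 - m) := by
    rw [← Finset.sum_erase_add _ _ (mem_univ j0)]
    have h1 : |(D - S0) i0 j0| = 1 - m := by
      have hs1 : S0 i0 j0 = 1 := by simp [hS0def, hσi0]
      rw [Matrix.sub_apply, hs1, hp', abs_of_nonpos (by linarith)]
      ring
    have h2 : ∀ j ∈ univ.erase j0, |(D - S0) i0 j| = D i0 j := by
      intro j hj
      have hne : j ≠ j0 := (Finset.mem_erase.mp hj).1
      rw [Matrix.sub_apply]; simp only [hS0def, hσi0, if_neg hne]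
      rw [sub_zero, abs_of_nonneg (hDpos i0 j)]
    rw [Finset.sum_congr rfl h2, h1, Finset.sum_erase_eq_sub (mem_univ j0), hDrow i0, hp']
    ring
  have hval : linftyOpNorm (D - S0) = 2 * (1 - m) := by
    unfold linftyOpNorm
    refine le_antisymm (ciSup_le (key S0 hS0)) ?_
    rw [← hrow]
    exact le_ciSup (f := fun i => ∑ j, |(D - S0) i j|) (Set.finite_range _).bddAbove i0
  constructor
  · exact ⟨S0, hS0, hval⟩
  · rintro x ⟨S, hS, rfl⟩
    exact ciSup_le (key S hS)
end

section
/- Let V be a strictly convex normed vector space, 𝓑 ⊆ V nonempty compact, and 𝓡 ⊆ V nonempty closed convex. If a Chebyshev center of 𝓑 relative to 𝓡 exists (i.e., a point x ∈ 𝓡 attaining inf_{w∈𝓡} sup_{z∈𝓑} ‖w − z‖), then it is unique. -/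
/-- In a strictly convex normed space, a Chebyshev center of a nonempty compact set `B`
relative to a nonempty closed convex constraint set `R` is unique (when it exists). -/
theorem chebyshev_center_unique {V : Type*} [NormedAddCommGroup V] [NormedSpace ℝ V]
    [StrictConvexSpace ℝ V]
    (B R : Set V) (hBne : B.Nonempty) (hBcomp : IsCompact B)
    (hRne : R.Nonempty) (hRclosed : IsClosed R) (hRconv : Convex ℝ R)
    (x y : V) (hx : x ∈ R) (hy : y ∈ R)
    (hxmin : ∀ w ∈ R, sSup ((fun z => ‖x - z‖) '' B) ≤ sSup ((fun z => ‖w - z‖) '' B))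
    (hymin : ∀ w ∈ R, sSup ((fun z => ‖y - z‖) '' B) ≤ sSup ((fun z => ‖w - z‖) '' B)) :
    x = y := by
  by_contra hne
  set r : ℝ := sSup ((fun z => ‖x - z‖) '' B) with hr
  have hry : sSup ((fun z => ‖y - z‖) '' B) = r :=
    le_antisymm (hymin x hx) (hxmin y hy)
  have bddx : BddAbove ((fun z => ‖x - z‖) '' B) :=
    (hBcomp.image (by fun_prop)).bddAbove
  have bddy : BddAbove ((fun z => ‖y - z‖) '' B) :=
    (hBcomp.image (by fun_prop)).bddAbove
  have hxle : ∀ z ∈ B, ‖x - z‖ ≤ r := fun z hz => le_csSup bddx ⟨z, hz, rfl⟩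
  have hyle : ∀ z ∈ B, ‖y - z‖ ≤ r := fun z hz => hry ▸ le_csSup bddy ⟨z, hz, rfl⟩
  set m : V := (1/2 : ℝ) • x + (1/2 : ℝ) • y with hm
  have hmR : m ∈ R := hRconv hx hy (by norm_num) (by norm_num) (by norm_num)
  -- sup attained on B for m
  obtain ⟨z0, hz0, hsup⟩ := hBcomp.exists_sSup_image_eq hBne
    (f := fun z => ‖m - z‖) (by fun_prop)
  have hdiff : x - z0 ≠ y - z0 := fun h => hne (by
    have := sub_left_injective h; exact this)
  have hlt : ‖m - z0‖ < r := by
    have : m - z0 = (1/2 : ℝ) • (x - z0) + (1/2 : ℝ) • (y - z0) := by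
      rw [hm]; module
    rw [this]
    exact norm_combo_lt_of_ne (hxle z0 hz0) (hyle z0 hz0) hdiff (by norm_num)
      (by norm_num) (by norm_num)
  have := hxmin m hmR
  rw [hsup] at this
  exact absurd this (not_le.mpr hlt)
end

section
/- Let ‖·‖ be a permutation-invariant norm on M_n(ℝ) and 𝓡 ⊆ M_n(ℝ) a convex permutation-invariant constraint set. If A ∈ 𝓡 is a Chebyshev center of Ω_n relative to 𝓡, then the matrix J_n A J_n = (n^{-1} Σ_{i,j} a_{ij}) J_n is also a Chebyshev center, and the Chebyshev radius equals ‖J_n A J_n − I_n‖. -/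
open Matrix Finset

/-- `P` is a permutation matrix. -/
def IsPermMatrix {n : ℕ} (P : Matrix (Fin n) (Fin n) ℝ) : Prop :=
  ∃ σ : Equiv.Perm (Fin n), P = σ.permMatrix ℝ

/-- `N` is a norm on `M_n(ℝ)`. -/
def IsMatrixNorm {n : ℕ} (N : Matrix (Fin n) (Fin n) ℝ → ℝ) : Prop :=
  (∀ A, 0 ≤ N A) ∧ (∀ A, N A = 0 ↔ A = 0) ∧
    (∀ A B, N (A + B) ≤ N A + N B) ∧ (∀ (c : ℝ) A, N (c • A) = |c| * N A)

/-- `N` is permutation-invariant: `N (P * A * Q) = N A` for permutation matrices `P, Q`. -/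
def PermInvariantNorm {n : ℕ} (N : Matrix (Fin n) (Fin n) ℝ → ℝ) : Prop :=
  ∀ P Q A, IsPermMatrix P → IsPermMatrix Q → N (P * A * Q) = N A

/-- A set of matrices is permutation-invariant if it is stable under two-sided
multiplication by permutation matrices. -/
def PermInvariantSet {n : ℕ} (R : Set (Matrix (Fin n) (Fin n) ℝ)) : Prop :=
  ∀ P Q K, IsPermMatrix P → IsPermMatrix Q → K ∈ R → P * K * Q ∈ R

/-- The radius `sup_{D ∈ Ω_n} N (A - D)` of the smallest bounding ball of the Birkhoff
polytope centered at `A`, with respect to the norm `N`. -/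
noncomputable def radAt {n : ℕ} (N : Matrix (Fin n) (Fin n) ℝ → ℝ)
    (A : Matrix (Fin n) (Fin n) ℝ) : ℝ :=
  sSup ((fun D => N (A - D)) '' {D | IsDoublyStochastic D})

/-- `A` is a Chebyshev center of the Birkhoff polytope relative to the norm `N` and the
constraint set `R`: `A ∈ R` and `A` attains `inf_{B ∈ R} sup_{D ∈ Ω_n} N (B - D)`. -/
def IsChebCenter {n : ℕ} (N : Matrix (Fin n) (Fin n) ℝ → ℝ)
    (R : Set (Matrix (Fin n) (Fin n) ℝ)) (A : Matrix (Fin n) (Fin n) ℝ) : Prop :=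
  A ∈ R ∧ radAt N A = sInf (radAt N '' R)

/-- The `n × n` matrix with every entry equal to `1/n`. -/
noncomputable def Jmat (n : ℕ) : Matrix (Fin n) (Fin n) ℝ :=
  Matrix.of fun _ _ => (n : ℝ)⁻¹

/-! ### Auxiliary lemmas -/

section Aux

variable {n : ℕ}

lemma isDS_iff (D : Matrix (Fin n) (Fin n) ℝ) :
    IsDoublyStochastic D ↔ D ∈ doublyStochastic ℝ (Fin n) := by
  rw [mem_doublyStochastic_iff_sum]; rfl

lemma permMatrix_mul (σ τ : Equiv.Perm (Fin n)) :
    σ.permMatrix ℝ * τ.permMatrix ℝ = Equiv.Perm.permMatrix ℝ (τ * σ) := by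
  have : (τ * σ : Equiv.Perm (Fin n)) = σ.trans τ := rfl
  simp [Equiv.Perm.permMatrix, this, Equiv.toPEquiv_trans, PEquiv.toMatrix_trans]

lemma permMatrix_one : ((1 : Equiv.Perm (Fin n)).permMatrix ℝ) = 1 := by
  have : ((1 : Equiv.Perm (Fin n)) : Fin n ≃ Fin n) = Equiv.refl (Fin n) := rfl
  rw [Equiv.Perm.permMatrix, this, Equiv.toPEquiv_refl, PEquiv.toMatrix_refl]

lemma permMatrix_mul_inv (σ : Equiv.Perm (Fin n)) :
    σ.permMatrix ℝ * (σ⁻¹).permMatrix ℝ = 1 := by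
  rw [permMatrix_mul, inv_mul_cancel, permMatrix_one]

lemma permMatrix_inv_mul (σ : Equiv.Perm (Fin n)) :
    (σ⁻¹).permMatrix ℝ * σ.permMatrix ℝ = 1 := by
  rw [permMatrix_mul, mul_inv_cancel, permMatrix_one]

lemma Jmat_mul_perm (σ : Equiv.Perm (Fin n)) :
    Jmat n * σ.permMatrix ℝ = Jmat n := by
  rw [Equiv.Perm.permMatrix, PEquiv.mul_toMatrix_toPEquiv]
  rfl

lemma isPermMatrix_mul {P Q : Matrix (Fin n) (Fin n) ℝ}
    (hP : IsPermMatrix P) (hQ : IsPermMatrix Q) : IsPermMatrix (P * Q) := by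
  obtain ⟨σ, rfl⟩ := hP; obtain ⟨τ, rfl⟩ := hQ
  exact ⟨τ * σ, permMatrix_mul σ τ⟩

lemma isPermMatrix_one : IsPermMatrix (1 : Matrix (Fin n) (Fin n) ℝ) :=
  ⟨1, _root_.permMatrix_one.symm⟩

lemma isDS_of_perm {P : Matrix (Fin n) (Fin n) ℝ} (hP : IsPermMatrix P) :
    IsDoublyStochastic P := by
  obtain ⟨σ, rfl⟩ := hP
  exact (isDS_iff _).2 permMatrix_mem_doublyStochastic

lemma isDS_one : IsDoublyStochastic (1 : Matrix (Fin n) (Fin n) ℝ) :=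
  isDS_of_perm isPermMatrix_one

/-- `J_n` is the average of all permutation matrices. -/
lemma Jmat_eq_avg (hn : 0 < n) :
    Jmat n = ((n.factorial : ℝ))⁻¹ • ∑ σ : Equiv.Perm (Fin n), σ.permMatrix ℝ := by
  have hn' : (n : ℝ) ≠ 0 := Nat.cast_ne_zero.2 hn.ne'
  have hf' : (n.factorial : ℝ) ≠ 0 := Nat.cast_ne_zero.2 n.factorial_ne_zero
  ext i j
  have hcount : ((univ.filter (fun σ : Equiv.Perm (Fin n) => σ i = j)).card : ℝ)
      = (n.factorial : ℝ) / n := by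
    have hconst : ∀ j' : Fin n, (univ.filter (fun σ : Equiv.Perm (Fin n) => σ i = j')).card
        = (univ.filter (fun σ : Equiv.Perm (Fin n) => σ i = j)).card := by
      intro j'
      apply Finset.card_bij' (fun σ _ => Equiv.swap j' j * σ) (fun σ _ => Equiv.swap j' j * σ)
      · intro σ hσ
        simp only [mem_filter, mem_univ, true_and] at hσ ⊢
        simp [Equiv.Perm.mul_apply, hσ, Equiv.swap_apply_left]
      · intro σ hσ
        simp only [mem_filter, mem_univ, true_and] at hσ ⊢
        simp [Equiv.Perm.mul_apply, hσ, Equiv.swap_apply_right]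
      · intro σ _; simp [← mul_assoc]
      · intro σ _; simp [← mul_assoc]
    have hsum : ∑ j' : Fin n, (univ.filter (fun σ : Equiv.Perm (Fin n) => σ i = j')).card
        = n.factorial := by
      rw [← Finset.card_eq_sum_card_fiberwise (f := fun σ : Equiv.Perm (Fin n) => σ i)
        (t := univ) (fun _ _ => mem_univ _)]
      simp [Fintype.card_perm]
    have hmul : (n : ℕ) * (univ.filter (fun σ : Equiv.Perm (Fin n) => σ i = j)).card
        = n.factorial := by
      rw [← hsum, Finset.sum_congr rfl (fun j' _ => hconst j')]
      simp [mul_comm]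
    have h2 : (n : ℝ) * ((univ.filter (fun σ : Equiv.Perm (Fin n) => σ i = j)).card : ℝ)
        = (n.factorial : ℝ) := by exact_mod_cast hmul
    rw [eq_div_iff hn']
    linarith
  have hentry : (∑ σ : Equiv.Perm (Fin n), σ.permMatrix ℝ) i j
      = ((univ.filter (fun σ : Equiv.Perm (Fin n) => σ i = j)).card : ℝ) := by
    have hval : ∀ σ : Equiv.Perm (Fin n), (σ.permMatrix ℝ) i j
        = if σ i = j then (1:ℝ) else 0 := fun σ => by
      simp [Equiv.Perm.permMatrix, PEquiv.toMatrix_apply, Equiv.toPEquiv_apply]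
    rw [← Finset.sum_boole (p := fun σ : Equiv.Perm (Fin n) => σ i = j)]
    simp only [Matrix.sum_apply, hval]
  rw [Matrix.smul_apply, hentry, hcount]
  show (n : ℝ)⁻¹ = _
  rw [smul_eq_mul]; field_simp

variable {N : Matrix (Fin n) (Fin n) ℝ → ℝ}

lemma N_zero (hN : IsMatrixNorm N) : N 0 = 0 := (hN.2.1 0).2 rfl

lemma N_sum_le (hN : IsMatrixNorm N) {ι : Type*} (s : Finset ι)
    (f : ι → Matrix (Fin n) (Fin n) ℝ) : N (∑ i ∈ s, f i) ≤ ∑ i ∈ s, N (f i) := by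
  classical
  induction s using Finset.induction_on with
  | empty => simp [N_zero hN]
  | insert _ _ h ih =>
    rename_i a s
    rw [Finset.sum_insert h, Finset.sum_insert h]
    exact (hN.2.2.1 _ _).trans (by linarith)

/-- If `N (B - P) ≤ c` for every permutation matrix `P`, then `N (B - D) ≤ c` for every
doubly stochastic `D` (Birkhoff's theorem). -/
lemma N_sub_DS_le (hN : IsMatrixNorm N) {B : Matrix (Fin n) (Fin n) ℝ} {c : ℝ}
    (hc : ∀ σ : Equiv.Perm (Fin n), N (B - σ.permMatrix ℝ) ≤ c)
    {D : Matrix (Fin n) (Fin n) ℝ} (hD : IsDoublyStochastic D) : N (B - D) ≤ c := by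
  obtain ⟨w, hw0, hw1, hwD⟩ :=
    exists_eq_sum_perm_of_mem_doublyStochastic ((isDS_iff D).1 hD)
  have hdecomp : B - D = ∑ σ : Equiv.Perm (Fin n), w σ • (B - σ.permMatrix ℝ) := by
    simp only [smul_sub]
    rw [Finset.sum_sub_distrib, ← Finset.sum_smul, hw1, one_smul, hwD]
  calc N (B - D) ≤ ∑ σ : Equiv.Perm (Fin n), N (w σ • (B - σ.permMatrix ℝ)) := by
        rw [hdecomp]; exact N_sum_le hN _ _
    _ = ∑ σ : Equiv.Perm (Fin n), w σ * N (B - σ.permMatrix ℝ) := by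
        refine Finset.sum_congr rfl fun σ _ => ?_
        rw [hN.2.2.2, abs_of_nonneg (hw0 σ)]
    _ ≤ ∑ σ : Equiv.Perm (Fin n), w σ * c :=
        Finset.sum_le_sum fun σ _ => mul_le_mul_of_nonneg_left (hc σ) (hw0 σ)
    _ = c := by rw [← Finset.sum_mul, hw1, one_mul]

lemma radAt_bddAbove (hN : IsMatrixNorm N) (B : Matrix (Fin n) (Fin n) ℝ) :
    BddAbove ((fun D => N (B - D)) '' {D | IsDoublyStochastic D}) := by
  refine ⟨(univ : Finset (Equiv.Perm (Fin n))).sup' ⟨1, mem_univ 1⟩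
    (fun σ => N (B - σ.permMatrix ℝ)), ?_⟩
  rintro x ⟨D, hD, rfl⟩
  exact N_sub_DS_le hN (fun σ => Finset.le_sup' (f := fun σ : Equiv.Perm (Fin n) => N (B - σ.permMatrix ℝ)) (mem_univ σ)) hD

lemma N_sub_le_radAt (hN : IsMatrixNorm N) (B : Matrix (Fin n) (Fin n) ℝ)
    {D : Matrix (Fin n) (Fin n) ℝ} (hD : IsDoublyStochastic D) :
    N (B - D) ≤ radAt N B :=
  le_csSup (radAt_bddAbove hN B) ⟨D, hD, rfl⟩

lemma radAt_nonneg (hN : IsMatrixNorm N) (B : Matrix (Fin n) (Fin n) ℝ) :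
    0 ≤ radAt N B :=
  le_trans (hN.1 (B - 1)) (N_sub_le_radAt hN B isDS_one)

lemma radAt_le (hN : IsMatrixNorm N) {B : Matrix (Fin n) (Fin n) ℝ} {c : ℝ}
    (hc : ∀ D, IsDoublyStochastic D → N (B - D) ≤ c) : radAt N B ≤ c :=
  csSup_le ⟨N (B - 1), 1, isDS_one, rfl⟩ (by rintro x ⟨D, hD, rfl⟩; exact hc D hD)

end Aux

/-- If `A` is a Chebyshev center of `Ω_n` relative to a permutation-invariant norm and a
convex permutation-invariant constraint set `R`, then `J_n A J_n = (n⁻¹ Σ_{i,j} a_{ij}) J_n`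
is also a Chebyshev center, and the Chebyshev radius equals `N (J_n A J_n − I_n)`. -/
theorem chebCenter_JAJ {n : ℕ} (hn : 0 < n)
    (N : Matrix (Fin n) (Fin n) ℝ → ℝ) (hN : IsMatrixNorm N) (hNperm : PermInvariantNorm N)
    (R : Set (Matrix (Fin n) (Fin n) ℝ)) (hR : PermInvariantSet R) (hRconv : Convex ℝ R)
    (A : Matrix (Fin n) (Fin n) ℝ) (hA : IsChebCenter N R A) :
    IsChebCenter N R (Jmat n * A * Jmat n) ∧
      Jmat n * A * Jmat n = ((n : ℝ)⁻¹ * ∑ i, ∑ j, A i j) • Jmat n ∧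
      sInf (radAt N '' R) = N (Jmat n * A * Jmat n - 1) := by
  classical
  have hf' : (n.factorial : ℝ) ≠ 0 := Nat.cast_ne_zero.2 n.factorial_ne_zero
  set B := Jmat n * A * Jmat n with hBdef
  set k : ℝ := ((n.factorial : ℝ))⁻¹ with hkdef
  have hk0 : 0 ≤ k := inv_nonneg.2 (Nat.cast_nonneg _)
  set S : Matrix (Fin n) (Fin n) ℝ := ∑ σ : Equiv.Perm (Fin n), σ.permMatrix ℝ with hSdef
  have hJ : Jmat n = k • S := Jmat_eq_avg hn
  -- the decomposition of B as a convex combination of P σ * A * P τ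
  have hB_decomp : B = ∑ p : Equiv.Perm (Fin n) × Equiv.Perm (Fin n),
      (k * k) • (p.1.permMatrix ℝ * A * p.2.permMatrix ℝ) := by
    rw [hBdef, hJ, smul_mul_assoc, smul_mul_assoc, mul_smul_comm, smul_smul]
    rw [hSdef, Finset.sum_mul, Finset.sum_mul]
    rw [Finset.smul_sum, Fintype.sum_prod_type]
    refine Finset.sum_congr rfl fun σ _ => ?_
    rw [Finset.mul_sum, Finset.smul_sum]
  have hwsum : ∑ _p : Equiv.Perm (Fin n) × Equiv.Perm (Fin n), (k * k) = 1 := by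
    rw [Finset.sum_const, Finset.card_univ, Fintype.card_prod, Fintype.card_perm,
      Fintype.card_fin, nsmul_eq_mul, hkdef]
    push_cast
    field_simp
  -- B ∈ R
  have hBmem : B ∈ R := by
    rw [hB_decomp]
    exact hRconv.sum_mem (fun _ _ => mul_nonneg hk0 hk0) hwsum
      (fun p _ => hR _ _ A ⟨p.1, rfl⟩ ⟨p.2, rfl⟩ hA.1)
  -- B is invariant under right multiplication by permutation matrices
  have hBP : ∀ σ : Equiv.Perm (Fin n), B * σ.permMatrix ℝ = B := by
    intro σ
    rw [hBdef, mul_assoc, Jmat_mul_perm]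
  have hNBP : ∀ σ : Equiv.Perm (Fin n), N (B - σ.permMatrix ℝ) = N (B - 1) := by
    intro σ
    have h1 : B - σ.permMatrix ℝ = 1 * (B - 1) * σ.permMatrix ℝ := by
      rw [one_mul, sub_mul, one_mul, hBP]
    rw [h1, hNperm _ _ _ isPermMatrix_one ⟨σ, rfl⟩]
  -- radius at B
  have hradB : radAt N B = N (B - 1) := by
    refine le_antisymm ?_ (N_sub_le_radAt hN B isDS_one)
    exact radAt_le hN fun D hD => N_sub_DS_le hN (fun σ => (hNBP σ).le) hD
  -- N (B - 1) ≤ radAt N A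
  have hNB1_le : N (B - 1) ≤ radAt N A := by
    have hone : ∑ _p : Equiv.Perm (Fin n) × Equiv.Perm (Fin n),
        (k * k) • (1 : Matrix (Fin n) (Fin n) ℝ) = 1 := by
      rw [← Finset.sum_smul, hwsum, one_smul]
    have hdecomp : B - 1 = ∑ p : Equiv.Perm (Fin n) × Equiv.Perm (Fin n),
        (k * k) • (p.1.permMatrix ℝ * A * p.2.permMatrix ℝ - 1) := by
      simp only [smul_sub]
      rw [Finset.sum_sub_distrib, ← hB_decomp, hone]
    have hterm : ∀ p : Equiv.Perm (Fin n) × Equiv.Perm (Fin n),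
        N (p.1.permMatrix ℝ * A * p.2.permMatrix ℝ - 1) ≤ radAt N A := by
      intro p
      set M : Matrix (Fin n) (Fin n) ℝ :=
        (p.1⁻¹).permMatrix ℝ * (p.2⁻¹).permMatrix ℝ with hMdef
      have hMperm : IsPermMatrix M := isPermMatrix_mul ⟨p.1⁻¹, rfl⟩ ⟨p.2⁻¹, rfl⟩
      have hPMQ : p.1.permMatrix ℝ * M * p.2.permMatrix ℝ = 1 := by
        rw [hMdef, ← mul_assoc, permMatrix_mul_inv, one_mul, permMatrix_inv_mul]
      have heq : p.1.permMatrix ℝ * (A - M) * p.2.permMatrix ℝ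
          = p.1.permMatrix ℝ * A * p.2.permMatrix ℝ - 1 := by
        rw [mul_sub, sub_mul, hPMQ]
      rw [← heq, hNperm _ _ _ ⟨p.1, rfl⟩ ⟨p.2, rfl⟩]
      exact N_sub_le_radAt hN A (isDS_of_perm hMperm)
    calc N (B - 1)
        ≤ ∑ p : Equiv.Perm (Fin n) × Equiv.Perm (Fin n),
          N ((k * k) • (p.1.permMatrix ℝ * A * p.2.permMatrix ℝ - 1)) := by
          rw [hdecomp]; exact N_sum_le hN _ _
      _ = ∑ p : Equiv.Perm (Fin n) × Equiv.Perm (Fin n),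
          (k * k) * N (p.1.permMatrix ℝ * A * p.2.permMatrix ℝ - 1) := by
          refine Finset.sum_congr rfl fun p _ => ?_
          rw [hN.2.2.2, abs_of_nonneg (mul_nonneg hk0 hk0)]
      _ ≤ ∑ _p : Equiv.Perm (Fin n) × Equiv.Perm (Fin n), (k * k) * radAt N A :=
          Finset.sum_le_sum fun p _ =>
            mul_le_mul_of_nonneg_left (hterm p) (mul_nonneg hk0 hk0)
      _ = radAt N A := by rw [← Finset.sum_mul, hwsum, one_mul]
  -- conclude
  have hbddBelow : BddBelow (radAt N '' R) := by
    refine ⟨0, ?_⟩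
    rintro x ⟨B', _, rfl⟩
    exact radAt_nonneg hN B'
  have hle : radAt N B ≤ sInf (radAt N '' R) := by
    rw [hradB, ← hA.2]; exact hNB1_le
  have hge : sInf (radAt N '' R) ≤ radAt N B := csInf_le hbddBelow ⟨B, hBmem, rfl⟩
  have radeq : radAt N B = sInf (radAt N '' R) := le_antisymm hle hge
  refine ⟨⟨hBmem, radeq⟩, ?_, by rw [← radeq, hradB]⟩
  -- the entrywise formula
  ext i j
  simp only [hBdef, Jmat, Matrix.mul_apply, Matrix.of_apply, Matrix.smul_apply, smul_eq_mul,
    Finset.sum_mul, Finset.mul_sum]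
  rw [Finset.sum_comm]
end

section
/- If ‖·‖ is a permutation-invariant norm on M_n(ℝ), then J_n is a Chebyshev center of Ω_n relative to the metric space (Ω_n, ‖·‖), and the Chebyshev radius equals ‖J_n − I_n‖; that is, max_{D∈Ω_n} ‖J_n − D‖ = ‖J_n − I_n‖ = min_{S∈Ω_n} max_{D∈Ω_n} ‖S − D‖. -/
open Matrix Finset

/-- For any permutation-invariant norm `N` on `M_n(ℝ)`, `J_n` is a Chebyshev center of
`Ω_n` relative to `(Ω_n, N)` and the Chebyshev radius equals `N (J_n − I_n)`:
`max_{D∈Ω_n} N (J_n − D) = N (J_n − I_n) = min_{S∈Ω_n} max_{D∈Ω_n} N (S − D)`. -/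
theorem Jmat_is_chebCenter {n : ℕ} (hn : 0 < n)
    (N : Matrix (Fin n) (Fin n) ℝ → ℝ) (hN : IsMatrixNorm N)
    (hNperm : PermInvariantNorm N) :
    sSup ((fun D => N (Jmat n - D)) '' {D | IsDoublyStochastic D}) = N (Jmat n - 1) ∧
    sInf ((fun S => sSup ((fun D => N (S - D)) '' {D | IsDoublyStochastic D})) ''
        {S | IsDoublyStochastic S}) = N (Jmat n - 1) := by
  haveI : NeZero n := ⟨hn.ne'⟩
  have hn' : (n : ℝ) ≠ 0 := Nat.cast_ne_zero.mpr hn.ne'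
  obtain ⟨hN0, hNeq, hNadd, hNsmul⟩ := hN
  have hN0' : N 0 = 0 := (hNeq 0).mpr rfl
  have hpermmul : ∀ (σ : Equiv.Perm (Fin n)) (M : Matrix (Fin n) (Fin n) ℝ) (i j : Fin n),
      (σ.permMatrix ℝ * M) i j = M (σ i) j := fun σ M i j => by
    rw [Equiv.Perm.permMatrix, PEquiv.toMatrix_toPEquiv_mul]; rfl
  have hone : ((1 : Equiv.Perm (Fin n)).permMatrix ℝ) = 1 := by
    rw [show (1 : Equiv.Perm (Fin n)) = Equiv.refl (Fin n) from rfl, Equiv.Perm.permMatrix,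
      Equiv.toPEquiv_refl, PEquiv.toMatrix_refl]
  have hNleft : ∀ (σ : Equiv.Perm (Fin n)) A, N (σ.permMatrix ℝ * A) = N A := fun σ A => by
    have := hNperm (σ.permMatrix ℝ) 1 A ⟨σ, rfl⟩ ⟨1, hone.symm⟩
    simpa using this
  have hNright : ∀ (σ : Equiv.Perm (Fin n)) A, N (A * σ.permMatrix ℝ) = N A := fun σ A => by
    have := hNperm 1 (σ.permMatrix ℝ) A ⟨1, hone.symm⟩ ⟨σ, rfl⟩
    simpa using this
  have hinv : ∀ σ : Equiv.Perm (Fin n), σ.permMatrix ℝ * (σ⁻¹).permMatrix ℝ = 1 := fun σ => by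
    rw [Equiv.Perm.permMatrix, Equiv.Perm.permMatrix, ← PEquiv.toMatrix_trans,
      ← Equiv.toPEquiv_trans, show σ.trans (σ⁻¹ : Equiv.Perm (Fin n)) = Equiv.refl (Fin n) from
        Equiv.self_trans_symm σ, Equiv.toPEquiv_refl, PEquiv.toMatrix_refl]
  have hDSiff : ∀ D : Matrix (Fin n) (Fin n) ℝ,
      IsDoublyStochastic D ↔ D ∈ doublyStochastic ℝ (Fin n) := fun D => by
    rw [mem_doublyStochastic_iff_sum]; exact Iff.rfl
  have hJDS : IsDoublyStochastic (Jmat n) := by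
    refine ⟨fun i j => by simp only [Jmat, Matrix.of_apply]; positivity, fun i => ?_, fun j => ?_⟩ <;>
      · simp only [Jmat, Matrix.of_apply, Finset.sum_const, card_univ, Fintype.card_fin,
          nsmul_eq_mul]
        field_simp
  have hJmul : ∀ σ : Equiv.Perm (Fin n), Jmat n * σ.permMatrix ℝ = Jmat n := fun σ => by
    rw [Equiv.Perm.permMatrix, PEquiv.mul_toMatrix_toPEquiv]; rfl
  -- upper bound: for all doubly stochastic D, N (J - D) ≤ N (J - 1)
  have hconv : ConvexOn ℝ Set.univ (fun M : Matrix (Fin n) (Fin n) ℝ => N (Jmat n - M)) := by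
    refine ⟨convex_univ, fun A _ B _ a b ha hb hab => ?_⟩
    have key : Jmat n - (a • A + b • B) = a • (Jmat n - A) + b • (Jmat n - B) := by
      ext i j
      simp only [Matrix.sub_apply, Matrix.add_apply, Matrix.smul_apply, smul_eq_mul]
      linear_combination (-(Jmat n i j)) * hab
    show N (Jmat n - (a • A + b • B)) ≤ a • N (Jmat n - A) + b • N (Jmat n - B)
    rw [key]
    calc N (a • (Jmat n - A) + b • (Jmat n - B))
        ≤ N (a • (Jmat n - A)) + N (b • (Jmat n - B)) := hNadd _ _
      _ = a * N (Jmat n - A) + b * N (Jmat n - B) := by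
          rw [hNsmul, hNsmul, abs_of_nonneg ha, abs_of_nonneg hb]
      _ = a • N (Jmat n - A) + b • N (Jmat n - B) := by simp [smul_eq_mul]
  have hub : ∀ D, IsDoublyStochastic D → N (Jmat n - D) ≤ N (Jmat n - 1) := by
    intro D hD
    have hDc : D ∈ convexHull ℝ {P : Matrix (Fin n) (Fin n) ℝ |
        ∃ σ : Equiv.Perm (Fin n), σ.permMatrix ℝ = P} := by
      have h := (hDSiff D).mp hD
      rw [← SetLike.mem_coe, doublyStochastic_eq_convexHull_permMatrix] at h
      exact h
    obtain ⟨P, hP, hle⟩ := hconv.exists_ge_of_mem_convexHull (Set.subset_univ _) hDc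
    obtain ⟨σ, rfl⟩ := hP
    refine hle.trans (le_of_eq ?_)
    rw [show Jmat n - σ.permMatrix ℝ = (Jmat n - 1) * σ.permMatrix ℝ by
      rw [Matrix.sub_mul, Matrix.one_mul, hJmul σ], hNright]
  -- part 1
  have part1 : sSup ((fun D => N (Jmat n - D)) '' {D | IsDoublyStochastic D})
      = N (Jmat n - 1) := by
    refine IsGreatest.csSup_eq ⟨⟨1, (hDSiff 1).mpr (one_mem _), rfl⟩, ?_⟩
    rintro x ⟨D, hD, rfl⟩
    exact hub D hD
  -- lower bound for part 2
  have hlb : ∀ S, IsDoublyStochastic S →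
      N (Jmat n - 1) ≤ sSup ((fun D => N (S - D)) '' {D | IsDoublyStochastic D}) := by
    intro S hS
    set T := ((fun D => N (S - D)) '' {D | IsDoublyStochastic D}) with hT
    have bdd : BddAbove T := by
      refine ⟨N (S - Jmat n) + N (Jmat n - 1), ?_⟩
      rintro x ⟨D, hD, rfl⟩
      show N (S - D) ≤ _
      rw [← sub_add_sub_cancel S (Jmat n) D]
      exact (hNadd _ _).trans (add_le_add le_rfl (hub D hD))
    set σk : Fin n → Equiv.Perm (Fin n) := fun k => Equiv.addLeft k with hσk
    have hsum : ∀ i j, ∑ k : Fin n, ((σk k).permMatrix ℝ * S) i j = 1 := by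
      intro i j
      rw [Finset.sum_congr rfl fun k _ => hpermmul (σk k) S i j]
      exact (Fintype.sum_equiv (Equiv.addRight i) _ (fun m => S m j) fun _ => rfl).trans
        (hS.2.2 j)
    have hkey : Jmat n - 1 = (n : ℝ)⁻¹ • ∑ k : Fin n, ((σk k).permMatrix ℝ * S - 1) := by
      ext i j
      simp only [Matrix.sub_apply, Matrix.smul_apply, Matrix.sum_apply, smul_eq_mul,
        Finset.sum_sub_distrib]
      rw [hsum i j]
      simp only [Finset.sum_const, card_univ, Fintype.card_fin, nsmul_eq_mul, Jmat,
        Matrix.of_apply]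
      field_simp
    have hstep : ∀ k : Fin n, N ((σk k).permMatrix ℝ * S - 1)
        = N (S - ((σk k)⁻¹).permMatrix ℝ) := by
      intro k
      rw [show (σk k).permMatrix ℝ * S - 1
          = (σk k).permMatrix ℝ * (S - ((σk k)⁻¹).permMatrix ℝ) by
        rw [Matrix.mul_sub, hinv]]
      exact hNleft _ _
    have heach : ∀ k : Fin n, N (S - ((σk k)⁻¹).permMatrix ℝ) ≤ sSup T := fun k =>
      le_csSup bdd ⟨_, (hDSiff _).mpr permMatrix_mem_doublyStochastic, rfl⟩
    calc N (Jmat n - 1)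
        = |(n : ℝ)⁻¹| * N (∑ k : Fin n, ((σk k).permMatrix ℝ * S - 1)) := by
          rw [hkey, hNsmul]
      _ = (n : ℝ)⁻¹ * N (∑ k : Fin n, ((σk k).permMatrix ℝ * S - 1)) := by
          rw [abs_of_nonneg (by positivity)]
      _ ≤ (n : ℝ)⁻¹ * ∑ k : Fin n, N ((σk k).permMatrix ℝ * S - 1) :=
          mul_le_mul_of_nonneg_left
            (Finset.le_sum_of_subadditive N hN0'.le hNadd univ _) (by positivity)
      _ = (n : ℝ)⁻¹ * ∑ k : Fin n, N (S - ((σk k)⁻¹).permMatrix ℝ) := by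
          rw [Finset.sum_congr rfl fun k _ => hstep k]
      _ ≤ (n : ℝ)⁻¹ * ∑ _k : Fin n, sSup T :=
          mul_le_mul_of_nonneg_left (Finset.sum_le_sum fun k _ => heach k) (by positivity)
      _ = sSup T := by
          rw [Finset.sum_const, card_univ, Fintype.card_fin, nsmul_eq_mul]
          field_simp
  refine ⟨part1, IsLeast.csInf_eq ⟨⟨Jmat n, hJDS, part1⟩, ?_⟩⟩
  rintro x ⟨S, hS, rfl⟩
  exact hlb S hS
end

section
/- The ℓ^1→ℓ^1 operator norm of J_n − I_n equals 2(1 − 1/n), and consequently the Chebyshev radius of Ω_n relative to (Ω_n, ‖·‖_{1→1}) equals 2(1 − 1/n). -/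
open Matrix Finset

section Aux

variable {n : ℕ}

lemma colsum_le_l1OpNorm (A : Matrix (Fin n) (Fin n) ℝ) (j : Fin n) :
    ∑ i, |A i j| ≤ l1OpNorm A := by
  unfold l1OpNorm
  exact le_ciSup (f := fun j => ∑ i, |A i j|) (Set.Finite.bddAbove (Set.finite_range _)) j

lemma l1OpNorm_le (hn : 0 < n) (A : Matrix (Fin n) (Fin n) ℝ) {c : ℝ}
    (h : ∀ j, ∑ i, |A i j| ≤ c) : l1OpNorm A ≤ c := by
  haveI : Nonempty (Fin n) := Fin.pos_iff_nonempty.mp hn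
  unfold l1OpNorm
  exact ciSup_le h

lemma nRinv_pos (hn : 0 < n) : (0:ℝ) < (n:ℝ)⁻¹ := by
  have : (0:ℝ) < n := by exact_mod_cast hn
  positivity

lemma J_ds (hn : 0 < n) : IsDoublyStochastic (Jmat n) := by
  have h : (n:ℝ) ≠ 0 := by exact_mod_cast hn.ne'
  refine ⟨fun i j => (nRinv_pos hn).le, fun i => ?_, fun j => ?_⟩ <;>
    simp [Jmat, Finset.card_univ, mul_inv_cancel₀ h]

lemma one_ds (hn : 0 < n) : IsDoublyStochastic (1 : Matrix (Fin n) (Fin n) ℝ) := by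
  refine ⟨fun i j => ?_, fun i => ?_, fun j => ?_⟩ <;>
    simp [Matrix.one_apply]
  split <;> norm_num

lemma ds_entry_le_one {S : Matrix (Fin n) (Fin n) ℝ} (hS : IsDoublyStochastic S)
    (i j : Fin n) : S i j ≤ 1 := by
  rw [← hS.2.2 j]
  exact Finset.single_le_sum (fun k _ => hS.1 k j) (mem_univ i)

lemma colsum_J_sub_one (hn : 0 < n) (j : Fin n) :
    ∑ i, |(Jmat n - 1) i j| = 2 * (1 - (n : ℝ)⁻¹) := by
  have hne : (n:ℝ) ≠ 0 := by exact_mod_cast hn.ne'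
  have h1 : (1:ℝ) ≤ n := by exact_mod_cast hn
  have hinv : (n:ℝ)⁻¹ ≤ 1 := by
    rw [inv_le_one_iff₀]; right; exact h1
  rw [← Finset.add_sum_erase _ _ (mem_univ j)]
  have hjj : |(Jmat n - 1) j j| = 1 - (n:ℝ)⁻¹ := by
    simp only [Matrix.sub_apply, Jmat, Matrix.of_apply, Matrix.one_apply_eq]
    rw [abs_of_nonpos (by linarith)]; ring
  have hoff : ∀ i ∈ univ.erase j, |(Jmat n - 1) i j| = (n:ℝ)⁻¹ := by
    intro i hi
    have hij : i ≠ j := Finset.ne_of_mem_erase hi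
    simp only [Matrix.sub_apply, Jmat, Matrix.of_apply, Matrix.one_apply_ne hij]
    rw [sub_zero, abs_of_nonneg (nRinv_pos hn).le]
  rw [hjj, Finset.sum_congr rfl hoff, Finset.sum_const,
    Finset.card_erase_of_mem (mem_univ j), Finset.card_univ, Fintype.card_fin,
    nsmul_eq_mul, Nat.cast_sub hn]
  field_simp
  ring

lemma colsum_J_sub_ds_le (hn : 0 < n) {D : Matrix (Fin n) (Fin n) ℝ}
    (hD : IsDoublyStochastic D) (j : Fin n) :
    ∑ i, |(Jmat n - D) i j| ≤ 2 * (1 - (n : ℝ)⁻¹) := by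
  have hne : (n:ℝ) ≠ 0 := by exact_mod_cast hn.ne'
  have h1 : (1:ℝ) ≤ n := by exact_mod_cast hn
  have hinv : (n:ℝ)⁻¹ ≤ 1 := by rw [inv_le_one_iff₀]; right; exact h1
  have habs : ∀ i, |(Jmat n - D) i j|
      = (n:ℝ)⁻¹ + D i j - 2 * min ((n:ℝ)⁻¹) (D i j) := by
    intro i
    simp only [Matrix.sub_apply, Jmat, Matrix.of_apply]
    rcases le_total ((n:ℝ)⁻¹) (D i j) with h | h
    · rw [min_eq_left h, abs_of_nonpos (by linarith)]; ring
    · rw [min_eq_right h, abs_of_nonneg (by linarith)]; ring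
  have hM : (n:ℝ)⁻¹ ≤ ∑ i, min ((n:ℝ)⁻¹) (D i j) := by
    by_cases h : ∃ i, (n:ℝ)⁻¹ ≤ D i j
    · obtain ⟨i, hi⟩ := h
      calc (n:ℝ)⁻¹ = min ((n:ℝ)⁻¹) (D i j) := (min_eq_left hi).symm
        _ ≤ ∑ k, min ((n:ℝ)⁻¹) (D k j) :=
          Finset.single_le_sum
            (fun k _ => le_min (nRinv_pos hn).le (hD.1 k j)) (mem_univ i)
    · push_neg at h
      have : ∀ i ∈ univ, min ((n:ℝ)⁻¹) (D i j) = D i j :=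
        fun i _ => min_eq_right (h i).le
      rw [Finset.sum_congr rfl this, hD.2.2 j]
      exact hinv
  calc ∑ i, |(Jmat n - D) i j|
      = ∑ i : Fin n, ((n:ℝ)⁻¹ + D i j) - 2 * ∑ i, min ((n:ℝ)⁻¹) (D i j) := by
        rw [Finset.sum_congr rfl (fun i _ => habs i), Finset.sum_sub_distrib,
          ← Finset.mul_sum]
    _ = 2 - 2 * ∑ i, min ((n:ℝ)⁻¹) (D i j) := by
        rw [Finset.sum_add_distrib, Finset.sum_const, Finset.card_univ,
          Fintype.card_fin, nsmul_eq_mul, mul_inv_cancel₀ hne, hD.2.2 j]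
        norm_num
    _ ≤ 2 - 2 * (n:ℝ)⁻¹ := by linarith
    _ = 2 * (1 - (n:ℝ)⁻¹) := by ring

lemma l1OpNorm_sub_ds_le_two (hn : 0 < n) {S D : Matrix (Fin n) (Fin n) ℝ}
    (hS : IsDoublyStochastic S) (hD : IsDoublyStochastic D) :
    l1OpNorm (S - D) ≤ 2 := by
  refine l1OpNorm_le hn _ (fun j => ?_)
  calc ∑ i, |(S - D) i j| ≤ ∑ i, (S i j + D i j) := by
        refine Finset.sum_le_sum (fun i _ => ?_)
        rw [Matrix.sub_apply]
        calc |S i j - D i j| ≤ |S i j| + |D i j| := abs_sub _ _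
          _ = S i j + D i j := by
            rw [abs_of_nonneg (hS.1 i j), abs_of_nonneg (hD.1 i j)]
    _ = 2 := by rw [Finset.sum_add_distrib, hS.2.2 j, hD.2.2 j]; norm_num

lemma exists_far_perm (hn : 0 < n) {S : Matrix (Fin n) (Fin n) ℝ}
    (hS : IsDoublyStochastic S) :
    ∃ D, IsDoublyStochastic D ∧ 2 * (1 - (n:ℝ)⁻¹) ≤ l1OpNorm (S - D) := by
  have hne : (n:ℝ) ≠ 0 := by exact_mod_cast hn.ne'
  set j0 : Fin n := ⟨0, hn⟩ with hj0
  have hex : ∃ i, S i j0 ≤ (n:ℝ)⁻¹ := by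
    by_contra h
    push_neg at h
    have hlt : (1:ℝ) < ∑ i, S i j0 := by
      calc (1:ℝ) = ∑ _i : Fin n, (n:ℝ)⁻¹ := by
            rw [Finset.sum_const, Finset.card_univ, Fintype.card_fin,
              nsmul_eq_mul, mul_inv_cancel₀ hne]
        _ < ∑ i, S i j0 :=
            Finset.sum_lt_sum_of_nonempty ⟨j0, mem_univ j0⟩ (fun i _ => h i)
    rw [hS.2.2 j0] at hlt
    linarith
  obtain ⟨i0, hi0⟩ := hex
  set σ := Equiv.swap i0 j0 with hσ
  set D : Matrix (Fin n) (Fin n) ℝ := fun i j => if i = σ j then 1 else 0 with hDdef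
  have hD : IsDoublyStochastic D := by
    refine ⟨fun i j => ?_, fun i => ?_, fun j => ?_⟩
    · dsimp only [D]; split <;> norm_num
    · have : ∀ j, (i = σ j) ↔ (σ.symm i = j) := fun j => (Equiv.symm_apply_eq σ).symm
      simp only [D, this, Finset.sum_ite_eq, mem_univ, if_true]
    · simp only [D, Finset.sum_ite_eq', mem_univ, if_true]
  refine ⟨D, hD, ?_⟩
  have hDj0 : ∀ i, D i j0 = if i = i0 then 1 else 0 := by
    intro i
    simp only [D, hσ, Equiv.swap_apply_right]
  have hS1 : S i0 j0 ≤ 1 := ds_entry_le_one hS i0 j0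
  have hcol : ∑ i, |(S - D) i j0| = 2 * (1 - S i0 j0) := by
    rw [← Finset.add_sum_erase _ _ (mem_univ i0)]
    have h1 : |(S - D) i0 j0| = 1 - S i0 j0 := by
      rw [Matrix.sub_apply, hDj0 i0, if_pos rfl, abs_of_nonpos (by linarith)]
      ring
    have h2 : ∀ i ∈ univ.erase i0, |(S - D) i j0| = S i j0 := by
      intro i hi
      have hii : i ≠ i0 := Finset.ne_of_mem_erase hi
      rw [Matrix.sub_apply, hDj0 i, if_neg hii, sub_zero, abs_of_nonneg (hS.1 i j0)]
    rw [h1, Finset.sum_congr rfl h2,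
      Finset.sum_erase_eq_sub (mem_univ i0), hS.2.2 j0]
    ring
  calc 2 * (1 - (n:ℝ)⁻¹) ≤ 2 * (1 - S i0 j0) := by linarith
    _ = ∑ i, |(S - D) i j0| := hcol.symm
    _ ≤ l1OpNorm (S - D) := colsum_le_l1OpNorm _ j0

end Aux

/-- `‖J_n − I_n‖_{1→1} = 2(1 − 1/n)`, and consequently the Chebyshev radius of `Ω_n`
relative to `(Ω_n, ‖·‖_{1→1})` equals `2(1 − 1/n)`. -/
theorem l1OpNorm_J_sub_I_and_cheb_radius {n : ℕ} (hn : 0 < n) :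
    l1OpNorm (Jmat n - 1) = 2 * (1 - (n : ℝ)⁻¹) ∧
    sInf ((fun S : Matrix (Fin n) (Fin n) ℝ => sSup ((fun D => l1OpNorm (S - D)) '' {D | IsDoublyStochastic D})) ''
        {S | IsDoublyStochastic S}) = 2 * (1 - (n : ℝ)⁻¹) := by
  haveI : Nonempty (Fin n) := Fin.pos_iff_nonempty.mp hn
  have part1 : l1OpNorm (Jmat n - 1) = 2 * (1 - (n : ℝ)⁻¹) := by
    unfold l1OpNorm
    simp only [colsum_J_sub_one hn]
    exact ciSup_const
  refine ⟨part1, ?_⟩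
  set f : Matrix (Fin n) (Fin n) ℝ → ℝ :=
    fun S => sSup ((fun D => l1OpNorm (S - D)) '' {D | IsDoublyStochastic D}) with hf
  set T : Set ℝ := f '' {S | IsDoublyStochastic S} with hT
  have hbdd : ∀ S : Matrix (Fin n) (Fin n) ℝ, IsDoublyStochastic S →
      BddAbove ((fun D => l1OpNorm (S - D)) '' {D | IsDoublyStochastic D}) := by
    intro S hS
    refine ⟨2, ?_⟩
    rintro x ⟨D, hD, rfl⟩
    exact l1OpNorm_sub_ds_le_two hn hS hD
  have hfJ : f (Jmat n) = 2 * (1 - (n : ℝ)⁻¹) := by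
    apply IsGreatest.csSup_eq
    constructor
    · exact ⟨1, one_ds hn, part1⟩
    · rintro x ⟨D, hD, rfl⟩
      exact l1OpNorm_le hn _ (colsum_J_sub_ds_le hn hD)
  have hmem : f (Jmat n) ∈ T := ⟨Jmat n, J_ds hn, rfl⟩
  have hlb : ∀ x ∈ T, 2 * (1 - (n : ℝ)⁻¹) ≤ x := by
    rintro x ⟨S, hS, rfl⟩
    obtain ⟨D, hD, hle⟩ := exists_far_perm hn hS
    exact hle.trans (le_csSup (hbdd S hS) ⟨D, hD, rfl⟩)
  apply le_antisymm
  · calc sInf T ≤ f (Jmat n) := csInf_le ⟨2 * (1 - (n:ℝ)⁻¹), hlb⟩ hmem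
      _ = 2 * (1 - (n:ℝ)⁻¹) := hfJ
  · exact le_csInf ⟨f (Jmat n), hmem⟩ hlb
end

section
/- J_n is the unique Chebyshev center of Ω_n relative to the metric space (Ω_n, ‖·‖_{1→1}): if D ∈ Ω_n satisfies max_{S∈Ω_n} ‖D − S‖_{1→1} = min_{D'∈Ω_n} max_{S∈Ω_n} ‖D' − S‖_{1→1}, then D = J_n. -/
open Matrix Finset

noncomputable def minEntry {n : ℕ} (D : Matrix (Fin n) (Fin n) ℝ) : ℝ :=
  ⨅ p : Fin n × Fin n, D p.1 p.2

lemma minEntry_le {n : ℕ} (D : Matrix (Fin n) (Fin n) ℝ) (i j : Fin n) :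
    minEntry D ≤ D i j := by
  have : Nonempty (Fin n) := ⟨i⟩
  exact ciInf_le (Finite.bddBelow_range _) (i, j)

lemma le_minEntry {n : ℕ} (hn : 0 < n) {D : Matrix (Fin n) (Fin n) ℝ} {c : ℝ}
    (h : ∀ i j, c ≤ D i j) : c ≤ minEntry D := by
  haveI : NeZero n := ⟨hn.ne'⟩
  exact le_ciInf fun p => h p.1 p.2

lemma exists_minEntry {n : ℕ} (hn : 0 < n) (D : Matrix (Fin n) (Fin n) ℝ) :
    ∃ i j, D i j = minEntry D := by
  haveI : NeZero n := ⟨hn.ne'⟩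
  obtain ⟨p, hp⟩ := Finite.exists_min (fun p : Fin n × Fin n => D p.1 p.2)
  exact ⟨p.1, p.2, le_antisymm (le_minEntry hn fun i j => hp (i, j)) (minEntry_le D p.1 p.2)⟩

lemma isDS_J {n : ℕ} (hn : 0 < n) : IsDoublyStochastic (Jmat n) := by
  have h0 : (0:ℝ) < (n:ℝ) := by exact_mod_cast hn
  refine ⟨fun i j => by simp only [Jmat, Matrix.of_apply]; positivity,
    fun i => ?_, fun j => ?_⟩ <;>
    simp [Jmat, Finset.sum_const, mul_inv_cancel₀ h0.ne']

lemma isDS_perm {n : ℕ} (σ : Equiv.Perm (Fin n)) :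
    IsDoublyStochastic (Matrix.of fun i j => if i = σ j then (1:ℝ) else 0) := by
  refine ⟨fun i j => by simp only [Matrix.of_apply]; positivity, fun i => ?_, fun j => ?_⟩
  · have : ∀ j : Fin n, (if i = σ j then (1:ℝ) else 0) = if j = σ.symm i then 1 else 0 := by
      intro j
      by_cases h : i = σ j <;> simp [h, Equiv.eq_symm_apply, eq_comm]
    simp only [Matrix.of_apply, this, Finset.sum_ite_eq' univ (σ.symm i) (fun _ => (1:ℝ)),
      mem_univ, if_true]
  · simp [Finset.sum_ite_eq univ (σ j) (fun _ => (1:ℝ))]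

lemma sum_min_ge {n : ℕ} (a : ℝ) (ha : 0 ≤ a) (ha1 : a ≤ 1) (s : Fin n → ℝ)
    (hs : ∀ i, 0 ≤ s i) (hsum : ∑ i, s i = 1) : a ≤ ∑ i, min a (s i) := by
  by_cases h : ∃ i, a ≤ s i
  · obtain ⟨i, hi⟩ := h
    calc a = min a (s i) := (min_eq_left hi).symm
    _ ≤ ∑ i, min a (s i) :=
      Finset.single_le_sum (fun i _ => le_min ha (hs i)) (mem_univ i)
  · push_neg at h
    have : ∀ i ∈ univ, min a (s i) = s i := fun i _ => min_eq_right (le_of_lt (h i))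
    rw [Finset.sum_congr rfl this, hsum]
    exact ha1

lemma minEntry_nonneg {n : ℕ} (hn : 0 < n) {D : Matrix (Fin n) (Fin n) ℝ}
    (hD : IsDoublyStochastic D) : 0 ≤ minEntry D :=
  le_minEntry hn hD.1

lemma entry_le_one {n : ℕ} {D : Matrix (Fin n) (Fin n) ℝ}
    (hD : IsDoublyStochastic D) (i j : Fin n) : D i j ≤ 1 := by
  calc D i j ≤ ∑ j', D i j' :=
    Finset.single_le_sum (fun j' _ => hD.1 i j') (mem_univ j)
  _ = 1 := hD.2.1 i

lemma minEntry_le_inv {n : ℕ} (hn : 0 < n) {D : Matrix (Fin n) (Fin n) ℝ}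
    (hD : IsDoublyStochastic D) : minEntry D ≤ (n:ℝ)⁻¹ := by
  have h0 : (0:ℝ) < (n:ℝ) := by exact_mod_cast hn
  haveI : NeZero n := ⟨hn.ne'⟩
  obtain ⟨i⟩ := (inferInstance : Nonempty (Fin n))
  have : (n:ℝ) * minEntry D ≤ 1 := by
    calc (n:ℝ) * minEntry D = ∑ _j : Fin n, minEntry D := by
          simp [Finset.sum_const, mul_comm]
    _ ≤ ∑ j, D i j := Finset.sum_le_sum fun j _ => minEntry_le D i j
    _ = 1 := hD.2.1 i
  rw [← one_div]
  rw [le_div_iff₀ h0]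
  linarith

lemma col_bound {n : ℕ} (hn : 0 < n) {D S : Matrix (Fin n) (Fin n) ℝ}
    (hD : IsDoublyStochastic D) (hS : IsDoublyStochastic S) (j : Fin n) :
    ∑ i, |D i j - S i j| ≤ 2 - 2 * minEntry D := by
  have habs : ∀ i, |D i j - S i j| = D i j + S i j - 2 * min (D i j) (S i j) := by
    intro i
    have h1 : max (D i j) (S i j) - min (D i j) (S i j) = |D i j - S i j| := by
      rw [abs_sub_comm]; exact max_sub_min_eq_abs _ _
    have h2 : max (D i j) (S i j) + min (D i j) (S i j) = D i j + S i j :=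
      max_add_min _ _
    linarith
  rw [Finset.sum_congr rfl fun i _ => habs i]
  rw [Finset.sum_sub_distrib, Finset.sum_add_distrib, hD.2.2 j, hS.2.2 j, ← Finset.mul_sum]
  have hm1 : minEntry D ≤ 1 := by
    haveI : NeZero n := ⟨hn.ne'⟩
    obtain ⟨i⟩ := (inferInstance : Nonempty (Fin n))
    exact (minEntry_le D i i).trans (entry_le_one hD i i)
  have key : minEntry D ≤ ∑ i, min (D i j) (S i j) := by
    calc minEntry D ≤ ∑ i, min (minEntry D) (S i j) :=
      sum_min_ge _ (minEntry_nonneg hn hD) hm1 _ (fun i => hS.1 i j) (hS.2.2 j)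
    _ ≤ ∑ i, min (D i j) (S i j) :=
      Finset.sum_le_sum fun i _ => min_le_min (minEntry_le D i j) le_rfl
  linarith

lemma sSup_eq {n : ℕ} (hn : 0 < n) {D : Matrix (Fin n) (Fin n) ℝ}
    (hD : IsDoublyStochastic D) :
    sSup ((fun S => l1OpNorm (D - S)) '' {S | IsDoublyStochastic S}) =
      2 - 2 * minEntry D := by
  haveI : NeZero n := ⟨hn.ne'⟩
  have hub : ∀ x ∈ (fun S => l1OpNorm (D - S)) '' {S | IsDoublyStochastic S},
      x ≤ 2 - 2 * minEntry D := by
    rintro x ⟨S, hS, rfl⟩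
    apply ciSup_le
    intro j
    simp only [Matrix.sub_apply]
    exact col_bound hn hD hS j
  apply le_antisymm
  · exact Real.sSup_le (fun x hx => hub x hx) (by
      have hm1 : minEntry D ≤ 1 :=
        (minEntry_le D ⟨0, hn⟩ ⟨0, hn⟩).trans (entry_le_one hD _ _)
      linarith)
  · obtain ⟨i0, j0, hij⟩ := exists_minEntry hn D
    set σ : Equiv.Perm (Fin n) := Equiv.swap j0 i0 with hσdef
    set S : Matrix (Fin n) (Fin n) ℝ := Matrix.of fun i j => if i = σ j then (1:ℝ) else 0
      with hSdef
    have hS : IsDoublyStochastic S := isDS_perm σ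
    have hmem : l1OpNorm (D - S) ∈ (fun S => l1OpNorm (D - S)) '' {S | IsDoublyStochastic S} :=
      ⟨S, hS, rfl⟩
    have hσj0 : σ j0 = i0 := Equiv.swap_apply_left _ _
    have hSi : ∀ i, S i j0 = if i = i0 then (1:ℝ) else 0 := by
      intro i; simp [hSdef, hσj0]
    have hDm1 : minEntry D ≤ 1 := hij ▸ entry_le_one hD i0 j0
    have hcol : ∑ i, |D i j0 - S i j0| = 2 - 2 * minEntry D := by
      have hsplit : |D i0 j0 - S i0 j0| + ∑ i ∈ univ.erase i0, |D i j0 - S i j0|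
          = ∑ i, |D i j0 - S i j0| :=
        Finset.add_sum_erase univ (fun i => |D i j0 - S i j0|) (mem_univ i0)
      have he : ∑ i ∈ univ.erase i0, |D i j0 - S i j0| = ∑ i ∈ univ.erase i0, D i j0 := by
        refine Finset.sum_congr rfl fun i hi => ?_
        rw [hSi i, if_neg (Finset.mem_erase.mp hi).1, sub_zero, abs_of_nonneg (hD.1 i j0)]
      have hes : ∑ i ∈ univ.erase i0, D i j0 = 1 - minEntry D := by
        have h2 := Finset.add_sum_erase univ (fun i => D i j0) (mem_univ i0)
        simp only [hD.2.2 j0] at h2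
        simp only [hij] at h2
        linarith
      have hf0 : |D i0 j0 - S i0 j0| = 1 - minEntry D := by
        rw [hSi i0, if_pos rfl, hij, abs_of_nonpos (by linarith)]
        ring
      rw [← hsplit, he, hes, hf0]
      ring
    have hle : 2 - 2 * minEntry D ≤ l1OpNorm (D - S) := by
      rw [← hcol]
      have hcongr : ∑ i, |D i j0 - S i j0| = ∑ i, |(D - S) i j0| := by
        simp [Matrix.sub_apply]
      rw [hcongr]
      unfold l1OpNorm
      exact le_ciSup (f := fun j => ∑ i, |(D - S) i j|) (Finite.bddAbove_range _) j0
    exact hle.trans (le_csSup ⟨_, hub⟩ hmem)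

/-- `J_n` is the unique Chebyshev center of `Ω_n` relative to `(Ω_n, ‖·‖_{1→1})`: any doubly
stochastic `D` attaining `min_{D'∈Ω_n} max_{S∈Ω_n} ‖D' − S‖_{1→1}` equals `J_n`. -/
theorem chebCenter_l1_unique {n : ℕ} (hn : 0 < n)
    (D : Matrix (Fin n) (Fin n) ℝ) (hD : IsDoublyStochastic D)
    (h : sSup ((fun S => l1OpNorm (D - S)) '' {S | IsDoublyStochastic S}) =
      sInf ((fun D' : Matrix (Fin n) (Fin n) ℝ =>
        sSup ((fun S => l1OpNorm (D' - S)) '' {S | IsDoublyStochastic S})) ''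
          {D' | IsDoublyStochastic D'})) :
    D = Jmat n := by
  have hJ := isDS_J hn
  have h0 : (0:ℝ) < (n:ℝ) := by exact_mod_cast hn
  have hmJ : minEntry (Jmat n) = (n:ℝ)⁻¹ := by
    refine le_antisymm (minEntry_le _ ⟨0, hn⟩ ⟨0, hn⟩) (le_minEntry hn fun i j => le_refl _)
  have hInf : sInf ((fun D' : Matrix (Fin n) (Fin n) ℝ =>
      sSup ((fun S => l1OpNorm (D' - S)) '' {S | IsDoublyStochastic S})) ''
        {D' | IsDoublyStochastic D'}) = 2 - 2 * (n:ℝ)⁻¹ := by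
    have hlb : ∀ x ∈ (fun D' : Matrix (Fin n) (Fin n) ℝ =>
        sSup ((fun S => l1OpNorm (D' - S)) '' {S | IsDoublyStochastic S})) ''
          {D' | IsDoublyStochastic D'}, 2 - 2 * (n:ℝ)⁻¹ ≤ x := by
      rintro x ⟨D', hD', rfl⟩
      dsimp only
      rw [sSup_eq hn hD']
      have := minEntry_le_inv hn hD'
      linarith
    refine le_antisymm (csInf_le ⟨2 - 2 * (n:ℝ)⁻¹, hlb⟩ ⟨Jmat n, hJ, ?_⟩)
      (le_csInf ⟨_, ⟨Jmat n, hJ, rfl⟩⟩ hlb)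
    dsimp only
    rw [sSup_eq hn hJ, hmJ]
  rw [sSup_eq hn hD, hInf] at h
  have hm : minEntry D = (n:ℝ)⁻¹ := by linarith
  have hge : ∀ i j, (n:ℝ)⁻¹ ≤ D i j := fun i j => hm ▸ minEntry_le D i j
  ext i j
  have hrow := hD.2.1 i
  have hsum : ∑ j, D i j = ∑ _j : Fin n, (n:ℝ)⁻¹ := by
    rw [hrow, Finset.sum_const, card_univ, Fintype.card_fin, nsmul_eq_mul,
      mul_inv_cancel₀ h0.ne']
  have hall : D i j = (n:ℝ)⁻¹ := by
    by_contra hne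
    have hlt : (n:ℝ)⁻¹ < D i j := lt_of_le_of_ne (hge i j) (Ne.symm hne)
    have : ∑ _j : Fin n, (n:ℝ)⁻¹ < ∑ j, D i j :=
      Finset.sum_lt_sum (fun k _ => hge i k) ⟨j, mem_univ j, hlt⟩
    linarith
  simpa [Jmat] using hall
end
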